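/- Fix k ≥ 1, ε > 0, δ > 0, R > 0 and constants as in the inductive scheme. Suppose (G_{ij})_{1≤i≤n, 1≤j≤k} ∈ ℂ^{n×k} satisfies: (a) |Σ_i conj(G_{ij}) G_{iℓ}| < √(n/δ) for all 1 ≤ j ≠ ℓ ≤ k; (b) |Σ_i |G_{ij}|²/n − 1| < √(2/(nδ)) for all j ≤ k; (c) |G_{ij}| < R for all i, j ≤ k. Let (U_j)_{j≤k} be the Gram–Schmidt orthonormalization of the columns (G_j)_{j≤k}. Then there exists N (depending only on k, ε, δ, R) such that for all n ≥ N, Σ_{i,j=1}^k |√n U_{ij} − G_{ij}| < ε. -/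

import Mathlib

/-! With `s = √n`, hypotheses (a) and (b) say `|⟨G_ℓ, G_j⟩| = O(s)` and `‖G_j‖ = s + O(1)`.
Along the Gram–Schmidt recursion, `‖s U_j - G_j‖ = O(1)` by induction on `j`: every coefficient
`⟨U_ℓ, G_j⟩ = (⟨G_ℓ, G_j⟩ + ⟨s U_ℓ - G_ℓ, G_j⟩) / s` is `O(1)`, hence so is `Δ_j`, and
`‖G_j - Δ_j‖ = s + O(1)`. This global bound is not small, but combined with (c) it gives
`U_{iℓ} = O(1/s)` for `i ≤ k`, so `Δ_j` has entries `O(1/s)` there; writing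
`s U_j - G_j = (s/‖G_j - Δ_j‖ - 1) G_j - (s/‖G_j - Δ_j‖) Δ_j` then shows that every entry of the
top `k × k` block of `s U - G` is `O(1/s)`, and the sum of the `k²` of them tends to `0`. -/

open scoped InnerProductSpace
open Finset

lemma abs_sub_le_of_abs_sq_sub_sq_le {x s t : ℝ} (hx : 0 ≤ x) (hs : 0 < s)
    (h : |x ^ 2 - s ^ 2| ≤ s * t) : |x - s| ≤ t := by
  have hfactor : |x - s| * (x + s) = |x ^ 2 - s ^ 2| := by
    rw [← abs_of_pos (by positivity : 0 < x + s), ← abs_mul]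
    ring_nf
  refine le_of_mul_le_mul_right ?_ hs
  nlinarith [abs_nonneg (x - s)]

lemma abs_sub_sqrt_le_of_abs_sq_div_sub_one_lt {x n δ : ℝ} (hx : 0 ≤ x) (hn : 0 < n)
    (hδ : 0 < δ) (h : |x ^ 2 / n - 1| < √(2 / (n * δ))) : |x - √n| ≤ √(2 / δ) := by
  have hs : 0 < √n := Real.sqrt_pos.mpr hn
  refine abs_sub_le_of_abs_sq_sub_sq_le hx hs ?_
  have hsqrt : √(2 / (n * δ)) = √(2 / δ) / √n := by
    rw [← Real.sqrt_div (by positivity)]; congr 1; field_simp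
  rw [hsqrt, div_sub_one hn.ne', abs_div, abs_of_pos hn, div_lt_div_iff₀ hn hs] at h
  rw [Real.sq_sqrt hn.le]
  refine le_of_mul_le_mul_right (h.le.trans_eq ?_) hs
  nth_rw 1 [← Real.mul_self_sqrt hn.le]
  ring

lemma lt_sqrt_of_ceil_sq_lt {x : ℝ} {n : ℕ} (h : ⌈x ^ 2⌉₊ < n) : x < √n :=
  Real.lt_sqrt_of_sq_lt <| (Nat.le_ceil _).trans_lt <| by exact_mod_cast h

-- `a + 2 Y_m` bounds the coefficients, so `k (a + 2 Y_m)` bounds `‖Δ_j‖`, which enters twice.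
def gramSchmidtErrBound (k : ℕ) (a T : ℝ) : ℕ → ℝ
  | 0 => 0
  | m + 1 => T + 2 * k * (a + 2 * gramSchmidtErrBound k a T m)

lemma gramSchmidtErrBound_nonneg {k : ℕ} {a T : ℝ} (ha : 0 ≤ a) (hT : 0 ≤ T) (m : ℕ) :
    0 ≤ gramSchmidtErrBound k a T m := by
  induction m with
  | zero => exact le_rfl
  | succ m ih => rw [gramSchmidtErrBound]; positivity

def gramSchmidtEntryConst (k : ℕ) (a T R : ℝ) : ℝ :=
  let c := a + 2 * gramSchmidtErrBound k a T k
  2 * (T + k * c) * R + 2 * (k * (c * (R + gramSchmidtErrBound k a T k)))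

section GramSchmidt

variable {𝕜 E F : Type*} [RCLike 𝕜] [NormedAddCommGroup E] [InnerProductSpace 𝕜 E]
  [SeminormedAddCommGroup F] [NormedSpace 𝕜 F] {k : ℕ}

-- the paper's `Δ_j`
variable (𝕜) in
def gramSchmidtProj (g U : Fin k → E) (j : Fin k) : E :=
  ∑ ℓ ∈ univ.filter (· < j), ⟪U ℓ, g j⟫_𝕜 • U ℓ

variable (𝕜) in
def IsGramSchmidtNormed (g U : Fin k → E) : Prop :=
  ∀ j, U j = (‖g j - gramSchmidtProj 𝕜 g U j‖⁻¹ : 𝕜) • (g j - gramSchmidtProj 𝕜 g U j)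

lemma norm_inv_norm_smul_le_one (x : E) : ‖(‖x‖⁻¹ : 𝕜) • x‖ ≤ 1 := by
  rcases eq_or_ne x 0 with rfl | hx
  · simp
  · exact (norm_smul_inv_norm hx).le

lemma norm_ofReal_smul_inv_norm_smul_sub_le (s : ℝ) (x : E) :
    ‖(s : 𝕜) • (‖x‖⁻¹ : 𝕜) • x - x‖ ≤ |s - ‖x‖| := by
  rcases eq_or_ne x 0 with rfl | hx
  · simp
  have hx' : ‖x‖ ≠ 0 := norm_ne_zero_iff.mpr hx
  have h : (s : 𝕜) • (‖x‖⁻¹ : 𝕜) • x - x = ((s / ‖x‖ - 1 : ℝ) : 𝕜) • x := by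
    rw [smul_smul]; push_cast; rw [sub_smul, one_smul, div_eq_mul_inv]
  rw [h, norm_smul, RCLike.norm_ofReal, ← abs_norm x, ← abs_mul, abs_norm]
  field_simp
  rfl

lemma abs_norm_sub_sub_le (x y : E) (s : ℝ) : |‖x - y‖ - s| ≤ |‖x‖ - s| + ‖y‖ := by
  have := abs_norm_sub_norm_le (x - y) x
  rw [sub_sub_cancel_left, norm_neg] at this
  calc |‖x - y‖ - s| = |(‖x - y‖ - ‖x‖) + (‖x‖ - s)| := by ring_nf
    _ ≤ |‖x - y‖ - ‖x‖| + |‖x‖ - s| := abs_add_le _ _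
    _ ≤ |‖x‖ - s| + ‖y‖ := by linarith

lemma norm_inner_le_of_norm_ofReal_smul_sub_le {u x y : E} {s a e : ℝ} (hs : 0 < s)
    (hy : ‖y‖ ≤ 2 * s) (hxy : ‖⟪x, y⟫_𝕜‖ ≤ a * s) (hu : ‖(s : 𝕜) • u - x‖ ≤ e) :
    ‖⟪u, y⟫_𝕜‖ ≤ a + 2 * e := by
  have he : 0 ≤ e := (norm_nonneg _).trans hu
  have hsplit : (s : 𝕜) * ⟪u, y⟫_𝕜 = ⟪x, y⟫_𝕜 + ⟪(s : 𝕜) • u - x, y⟫_𝕜 := by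
    rw [inner_sub_left, inner_smul_left, RCLike.conj_ofReal]; ring
  have : s * ‖⟪u, y⟫_𝕜‖ ≤ s * (a + 2 * e) := by
    calc s * ‖⟪u, y⟫_𝕜‖ = ‖⟪x, y⟫_𝕜 + ⟪(s : 𝕜) • u - x, y⟫_𝕜‖ := by
          rw [← hsplit, norm_mul, RCLike.norm_ofReal, abs_of_pos hs]
      _ ≤ a * s + e * (2 * s) :=
          (norm_add_le _ _).trans (add_le_add hxy ((norm_inner_le_norm _ _).trans
            (mul_le_mul hu hy (norm_nonneg _) he)))
      _ = s * (a + 2 * e) := by ring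
  exact le_of_mul_le_mul_left this hs

lemma norm_map_gramSchmidtProj_le (φ : E →ₗ[𝕜] F) {g U : Fin k → E} (j : Fin k) {c b : ℝ}
    (hc : 0 ≤ c) (hb : 0 ≤ b) (hcoef : ∀ ℓ < j, ‖⟪U ℓ, g j⟫_𝕜‖ ≤ c)
    (hφ : ∀ ℓ < j, ‖φ (U ℓ)‖ ≤ b) : ‖φ (gramSchmidtProj 𝕜 g U j)‖ ≤ k * (c * b) := by
  rw [gramSchmidtProj, map_sum]
  calc ‖∑ ℓ ∈ univ.filter (· < j), φ (⟪U ℓ, g j⟫_𝕜 • U ℓ)‖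
      ≤ ∑ ℓ ∈ univ.filter (· < j), c * b := by
        refine norm_sum_le_of_le _ fun ℓ hℓ => ?_
        have hℓ : ℓ < j := (mem_filter.mp hℓ).2
        rw [map_smul, norm_smul]
        exact mul_le_mul (hcoef ℓ hℓ) (hφ ℓ hℓ) (norm_nonneg _) hc
    _ ≤ ∑ _ℓ : Fin k, c * b :=
        sum_le_sum_of_subset_of_nonneg (filter_subset _ _) fun _ _ _ => by positivity
    _ = k * (c * b) := by simp

lemma norm_map_ofReal_smul_inv_norm_smul_sub_le (φ : E →ₗ[𝕜] F) {x y : E} {s Q R D : ℝ}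
    (hs : 0 < s) (hQ : |‖x - y‖ - s| ≤ Q) (hQs : 2 * Q ≤ s) (hx : ‖φ x‖ ≤ R)
    (hy : ‖φ y‖ ≤ D / s) :
    ‖(s : 𝕜) • φ ((‖x - y‖⁻¹ : 𝕜) • (x - y)) - φ x‖ ≤ (2 * Q * R + 2 * D) / s := by
  set r := ‖x - y‖
  have hr : s / 2 ≤ r := by linarith [(abs_le.mp hQ).1]
  have hr0 : 0 < r := by linarith
  have hQ0 : 0 ≤ Q := (abs_nonneg _).trans hQ
  have hsplit : (s : 𝕜) • φ ((r⁻¹ : 𝕜) • (x - y)) - φ x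
      = ((s / r - 1 : ℝ) : 𝕜) • φ x - ((s / r : ℝ) : 𝕜) • φ y := by
    rw [map_smul, map_sub, smul_smul, smul_sub]
    push_cast
    rw [sub_smul, one_smul, div_eq_mul_inv]
    abel
  have hcoef1 : |s / r - 1| ≤ 2 * Q / s := by
    rw [div_sub_one hr0.ne', abs_div, abs_of_pos hr0, abs_sub_comm, div_le_div_iff₀ hr0 hs]
    nlinarith
  have hcoef2 : s / r ≤ 2 := by rw [div_le_iff₀ hr0]; linarith
  rw [hsplit]
  calc ‖((s / r - 1 : ℝ) : 𝕜) • φ x - ((s / r : ℝ) : 𝕜) • φ y‖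
      ≤ |s / r - 1| * ‖φ x‖ + s / r * ‖φ y‖ := by
        refine (norm_sub_le _ _).trans_eq ?_
        rw [norm_smul, norm_smul, RCLike.norm_ofReal, RCLike.norm_ofReal,
          abs_of_pos (by positivity : 0 < s / r)]
    _ ≤ 2 * Q / s * R + 2 * (D / s) := by
        gcongr
    _ = (2 * Q * R + 2 * D) / s := by ring

namespace IsGramSchmidtNormed

variable {g U : Fin k → E}

lemma norm_le_one (hU : IsGramSchmidtNormed 𝕜 g U) (j : Fin k) : ‖U j‖ ≤ 1 := by
  rw [hU j]; exact norm_inv_norm_smul_le_one _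

lemma norm_ofReal_smul_sub_le_of_proj (hU : IsGramSchmidtNormed 𝕜 g U) (s : ℝ) (j : Fin k) :
    ‖(s : 𝕜) • U j - g j‖ ≤ |‖g j‖ - s| + 2 * ‖gramSchmidtProj 𝕜 g U j‖ := by
  set Δ := gramSchmidtProj 𝕜 g U j
  have hsplit : (s : 𝕜) • U j - g j = ((s : 𝕜) • U j - (g j - Δ)) - Δ := by abel
  calc ‖(s : 𝕜) • U j - g j‖ ≤ ‖(s : 𝕜) • U j - (g j - Δ)‖ + ‖Δ‖ := by
        rw [hsplit]; exact norm_sub_le _ _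
    _ ≤ |‖g j - Δ‖ - s| + ‖Δ‖ := by
        rw [hU j, abs_sub_comm]; gcongr; exact norm_ofReal_smul_inv_norm_smul_sub_le _ _
    _ ≤ |‖g j‖ - s| + 2 * ‖Δ‖ := by linarith [abs_norm_sub_sub_le (g j) Δ s]

theorem norm_ofReal_smul_sub_le (hU : IsGramSchmidtNormed 𝕜 g U) {s a T : ℝ} (hs : 0 < s)
    (ha : 0 ≤ a) (hT : 0 ≤ T) (hTs : T ≤ s) (hg : ∀ j, |‖g j‖ - s| ≤ T)
    (hinner : ∀ ℓ j, ℓ ≠ j → ‖⟪g ℓ, g j⟫_𝕜‖ ≤ a * s) (j : Fin k) :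
    ‖(s : 𝕜) • U j - g j‖ ≤ gramSchmidtErrBound k a T k := by
  have hgs : ∀ j, ‖g j‖ ≤ 2 * s := fun j => by linarith [(abs_le.mp (hg j)).2]
  suffices h : ∀ m, ∀ j : Fin k, (j : ℕ) < m →
      ‖(s : 𝕜) • U j - g j‖ ≤ gramSchmidtErrBound k a T m from h k j j.isLt
  intro m
  induction m with
  | zero => intro j hj; omega
  | succ m ih =>
    intro j hj
    have hY := gramSchmidtErrBound_nonneg (k := k) ha hT m
    have hcoef : ∀ ℓ < j, ‖⟪U ℓ, g j⟫_𝕜‖ ≤ a + 2 * gramSchmidtErrBound k a T m :=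
      fun ℓ hℓ => norm_inner_le_of_norm_ofReal_smul_sub_le hs (hgs j) (hinner ℓ j hℓ.ne)
        (ih ℓ (by omega))
    have hΔ := norm_map_gramSchmidtProj_le LinearMap.id j (by positivity) zero_le_one hcoef
      fun ℓ _ => hU.norm_le_one ℓ
    calc ‖(s : 𝕜) • U j - g j‖ ≤ |‖g j‖ - s| + 2 * ‖gramSchmidtProj 𝕜 g U j‖ :=
          hU.norm_ofReal_smul_sub_le_of_proj s j
      _ ≤ T + 2 * (k * ((a + 2 * gramSchmidtErrBound k a T m) * 1)) :=
          add_le_add (hg j) (by simpa using hΔ)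
      _ = gramSchmidtErrBound k a T (m + 1) := by rw [gramSchmidtErrBound]; ring

theorem norm_ofReal_smul_map_sub_map_le (hU : IsGramSchmidtNormed 𝕜 g U) (φ : E →ₗ[𝕜] F)
    (hφ : ∀ x, ‖φ x‖ ≤ ‖x‖) {s a T R : ℝ} (hs : 0 < s) (ha : 0 ≤ a) (hT : 0 ≤ T) (hR : 0 ≤ R)
    (hQs : 2 * (T + k * (a + 2 * gramSchmidtErrBound k a T k)) ≤ s)
    (hg : ∀ j, |‖g j‖ - s| ≤ T) (hinner : ∀ ℓ j, ℓ ≠ j → ‖⟪g ℓ, g j⟫_𝕜‖ ≤ a * s)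
    (hgR : ∀ j, ‖φ (g j)‖ ≤ R) (j : Fin k) :
    ‖(s : 𝕜) • φ (U j) - φ (g j)‖ ≤ gramSchmidtEntryConst k a T R / s := by
  set Y := gramSchmidtErrBound k a T k
  set c := a + 2 * Y
  have hY : 0 ≤ Y := gramSchmidtErrBound_nonneg ha hT k
  have hc : 0 ≤ c := by positivity
  have hTs : T ≤ s := by nlinarith
  have hgs : ‖g j‖ ≤ 2 * s := by linarith [(abs_le.mp (hg j)).2]
  have hE := hU.norm_ofReal_smul_sub_le hs ha hT hTs hg hinner
  have hcoef : ∀ ℓ < j, ‖⟪U ℓ, g j⟫_𝕜‖ ≤ c := fun ℓ hℓ =>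
    norm_inner_le_of_norm_ofReal_smul_sub_le hs hgs (hinner ℓ j hℓ.ne) (hE ℓ)
  have hΔ := norm_map_gramSchmidtProj_le LinearMap.id j hc zero_le_one hcoef
    fun ℓ _ => hU.norm_le_one ℓ
  have hφU : ∀ ℓ, ‖φ (U ℓ)‖ ≤ (R + Y) / s := fun ℓ => by
    rw [le_div_iff₀ hs, mul_comm]
    calc s * ‖φ (U ℓ)‖ = ‖φ ((s : 𝕜) • U ℓ)‖ := by
          rw [map_smul, norm_smul, RCLike.norm_ofReal, abs_of_pos hs]
      _ ≤ ‖φ ((s : 𝕜) • U ℓ - g ℓ)‖ + ‖φ (g ℓ)‖ := by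
          rw [map_sub]; exact norm_le_norm_sub_add _ _
      _ ≤ R + Y := by linarith [hφ ((s : 𝕜) • U ℓ - g ℓ), hE ℓ, hgR ℓ]
  have hφΔ := norm_map_gramSchmidtProj_le φ j hc (by positivity) hcoef fun ℓ _ => hφU ℓ
  rw [← mul_div_assoc, ← mul_div_assoc] at hφΔ
  rw [hU j]
  exact norm_map_ofReal_smul_inv_norm_smul_sub_le φ hs
    ((abs_norm_sub_sub_le _ _ _).trans (add_le_add (hg j) (by simpa using hΔ))) hQs
    (hgR j) hφΔ

end IsGramSchmidtNormed

end GramSchmidt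

/-- The deterministic core of the proof (`Dⁿ ⊆ Eⁿ`): if the `n × k` matrix `G` has
almost orthogonal columns (a), columns of norm close to `√n` (b), and bounded upper
`k × k` entries (c), and `U` is the Gram–Schmidt orthonormalization of the columns
`g j = (G i j)_i` of `G`, then for all sufficiently large `n` (with threshold depending
only on `k, ε, δ, R`) one has `∑_{i,j≤k} |√n U_{ij} − G_{ij}| < ε`. -/
theorem stmt19 (k : ℕ) (ε δ R : ℝ) (hε : 0 < ε) (hδ : 0 < δ) (hR : 0 < R) :
    ∃ N : ℕ, ∀ n : ℕ, N ≤ n → ∀ (hkn : k ≤ n) (G : Fin n → Fin k → ℂ)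
      (g U : Fin k → EuclideanSpace ℂ (Fin n)),
      (∀ (j : Fin k) (i : Fin n), g j i = G i j) →
      (∀ j ℓ : Fin k, j ≠ ℓ →
        ‖∑ i, (starRingEnd ℂ) (G i j) * G i ℓ‖ < Real.sqrt (n / δ)) →
      (∀ j : Fin k, |(∑ i, ‖G i j‖ ^ 2) / n - 1| < Real.sqrt (2 / (n * δ))) →
      (∀ i j : Fin k, ‖G (Fin.castLE hkn i) j‖ < R) →
      LinearIndependent ℂ g →
      (∀ j : Fin k, U j =
        ‖g j - ∑ ℓ ∈ univ.filter (fun ℓ => ℓ < j), (⟪U ℓ, g j⟫_ℂ) • U ℓ‖⁻¹ •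
          (g j - ∑ ℓ ∈ univ.filter (fun ℓ => ℓ < j), (⟪U ℓ, g j⟫_ℂ) • U ℓ)) →
      ∑ i : Fin k, ∑ j : Fin k,
        ‖(Real.sqrt n : ℂ) * U j (Fin.castLE hkn i) - G (Fin.castLE hkn i) j‖
          < ε := by
  set a := √(1 / δ)
  set T := √(2 / δ)
  set Q := T + k * (a + 2 * gramSchmidtErrBound k a T k)
  set K := gramSchmidtEntryConst k a T R
  refine ⟨⌈(2 * Q) ^ 2⌉₊ + ⌈(k ^ 2 * K / ε) ^ 2⌉₊ + 1,
    fun n hNn hkn G g U hgG horth hnorm hG _ hU => ?_⟩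
  have hQs : 2 * Q < √n := lt_sqrt_of_ceil_sq_lt (by omega)
  have hKs : k ^ 2 * K / ε < √n := lt_sqrt_of_ceil_sq_lt (by omega)
  have hn : (0 : ℝ) < n := by exact_mod_cast (show 0 < n by omega)
  have hs : 0 < √n := Real.sqrt_pos.mpr hn
  have hg : ∀ j, |‖g j‖ - √n| ≤ T := fun j =>
    abs_sub_sqrt_le_of_abs_sq_div_sub_one_lt (norm_nonneg _) hn hδ <| by
      simpa [EuclideanSpace.norm_sq_eq, hgG] using hnorm j
  have hinner : ∀ ℓ j, ℓ ≠ j → ‖⟪g ℓ, g j⟫_ℂ‖ ≤ a * √n := fun ℓ j hℓj => by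
    rw [← Real.sqrt_mul (by positivity), one_div_mul_eq_div]
    simpa [PiLp.inner_apply, hgG, mul_comm] using (horth ℓ j hℓj).le
  have hGS : IsGramSchmidtNormed ℂ g U := fun j => by
    rw [hU j, RCLike.real_smul_eq_coe_smul (K := ℂ), RCLike.ofReal_inv]; rfl
  have hentry : ∀ i j : Fin k,
      ‖(√n : ℂ) * U j (Fin.castLE hkn i) - G (Fin.castLE hkn i) j‖ ≤ K / √n := fun i j => by
    have h := hGS.norm_ofReal_smul_map_sub_map_le
      (EuclideanSpace.projₗ (Fin.castLE hkn i)) (fun x => PiLp.norm_apply_le x _) hs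
      (Real.sqrt_nonneg _) (Real.sqrt_nonneg _) hR.le hQs.le hg hinner
      (fun j => by simpa [hgG] using (hG i j).le) j
    simp only [PiLp.projₗ_apply, smul_eq_mul, hgG] at h
    exact h
  calc ∑ i : Fin k, ∑ j : Fin k,
        ‖(√n : ℂ) * U j (Fin.castLE hkn i) - G (Fin.castLE hkn i) j‖
      ≤ ∑ _i : Fin k, ∑ _j : Fin k, K / √n := by gcongr with i _ j _; exact hentry i j
    _ = k ^ 2 * K / √n := by
        simp only [sum_const, card_univ, Fintype.card_fin, nsmul_eq_mul]; ring
    _ < ε := by rwa [div_lt_iff₀ hs, ← div_lt_iff₀' hε]
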